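/- There exists a constant C > 0 with the following property. Let M ≥ 1, h = 1/M, Δt > 0, let dᵐ : (ℤ/Mℤ)³ → ℝ³ be a grid function with |dᵐ_i| = 1 for all i, and let wᵐ : (ℤ/Mℤ)³ → ℝ³ be any grid function. Define the map F_m sending a grid function u : (ℤ/Mℤ)³ → ℝ³ to the grid function F_m(u) given by F_m(u)_i = wᵐ_i + Δt (Δ_h (V_{Δt}(ū) dᵐ))_i × (V_{Δt}(ū_i) dᵐ_i), where ū_i = (wᵐ_i + u_i)/2 and V_{Δt}(ū) dᵐ denotes the grid function i ↦ V_{Δt}(ū_i) dᵐ_i. Then for all grid functions u₁, u₂, ‖F_m(u₁) − F_m(u₂)‖ ≤ C (Δt²/h²) ‖u₁ − u₂‖ in the discrete L² norm. In particular, there exists κ > 0 such that whenever Δt ≤ κ h, the map F_m is a contraction and has a unique fixed point. -/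

import Mathlib

noncomputable section
open scoped BigOperators

/-- Euclidean norm on ℝ³. -/
def enorm3 (v : Fin 3 → ℝ) : ℝ := Real.sqrt (∑ i, v i ^ 2)

/-- Squared Euclidean norm on ℝ³. -/
def sq3 (v : Fin 3 → ℝ) : ℝ := ∑ i, v i ^ 2

/-- The propagation matrix `V_τ(w)` applied to a vector `v`. -/
def Vmat (τ : ℝ) (w v : Fin 3 → ℝ) : Fin 3 → ℝ :=
  (1 + τ ^ 2 / 4 * sq3 w)⁻¹ •
    ((1 - τ ^ 2 / 4 * sq3 w) • v + (τ ^ 2 / 2 * ∑ i, w i * v i) • w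
      + τ • crossProduct v w)

/-- Forward difference `D⁺_j` of a periodic grid function on `(ℤ/Mℤ)³`. -/
def Dp {M : ℕ} (h : ℝ) (u : (Fin 3 → ZMod M) → Fin 3 → ℝ) (j : Fin 3)
    (i : Fin 3 → ZMod M) : Fin 3 → ℝ :=
  h⁻¹ • (u (i + Pi.single j 1) - u i)

/-- Backward difference `D⁻_j`. -/
def Dm {M : ℕ} (h : ℝ) (u : (Fin 3 → ZMod M) → Fin 3 → ℝ) (j : Fin 3)
    (i : Fin 3 → ZMod M) : Fin 3 → ℝ :=
  h⁻¹ • (u i - u (i - Pi.single j 1))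

/-- Discrete Laplacian `Δ_h = Σ_j D⁺_j D⁻_j`. -/
def lapl {M : ℕ} (h : ℝ) (u : (Fin 3 → ZMod M) → Fin 3 → ℝ)
    (i : Fin 3 → ZMod M) : Fin 3 → ℝ :=
  ∑ j, Dp h (Dm h u j) j i

/-- Discrete L² norm: `‖u‖ = (h³ Σ_i |u(i)|²)^(1/2)`. -/
def l2norm {M : ℕ} [NeZero M] (h : ℝ) (u : (Fin 3 → ZMod M) → Fin 3 → ℝ) : ℝ :=
  Real.sqrt (h ^ 3 * ∑ i, ∑ k, u i k ^ 2)

/-- The fixed point map `F_m` of the angular momentum method: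
`F_m(u)_i = wᵐ_i + Δt (Δ_h(V_{Δt}(ū)dᵐ))_i × (V_{Δt}(ū_i)dᵐ_i)` with
`ū_i = (wᵐ_i + u_i)/2`. -/
def Fm {M : ℕ} (h Δt : ℝ) (dm wm u : (Fin 3 → ZMod M) → Fin 3 → ℝ)
    (i : Fin 3 → ZMod M) : Fin 3 → ℝ :=
  wm i + Δt • crossProduct
    (lapl h (fun j => Vmat Δt ((2 : ℝ)⁻¹ • (wm j + u j)) (dm j)) i)
    (Vmat Δt ((2 : ℝ)⁻¹ • (wm i + u i)) (dm i))

/-! `V_τ(w)` is the Cayley transform `(I - (τ/2) Q(w))⁻¹ (I + (τ/2) Q(w))` of the skew matrix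
`Q(w)`: it is orthogonal, and subtracting the identities `V - (τ/2) V × w = d + (τ/2) d × w` for
`w` and `w'` gives `|V_τ(w) d - V_τ(w') d| ≤ τ |d| |w - w'|`.

With `Vₖ = V_{Δt}(ūₖ) dᵐ` and `g = V₁ - V₂` one has
`F_m(u₁) - F_m(u₂) = Δt (Δ_h g × V₁ + Δ_h V₂ × g)`. On the periodic grid each difference quotient
costs a factor `2/h`, both in `ℓ²` and in `ℓ^∞`, and `|V₁| = |V₂| = 1`; so both terms are at most
`12 Δt h⁻² ‖g‖` in `ℓ²`, while `‖g‖ ≤ Δt ‖u₁ - u₂‖ / 2`. This is the Lipschitz constant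
`12 Δt² / h²`, which is `< 1` once `Δt ≤ h / 4`; Banach's fixed point theorem then applies after
identifying the discrete `L²` norm with a multiple of a Euclidean norm. -/

open Matrix Finset

lemma sq3_nonneg (v : Fin 3 → ℝ) : 0 ≤ sq3 v := sum_nonneg fun _ _ => sq_nonneg _

lemma sq3_eq_one_of_enorm3_eq_one {v : Fin 3 → ℝ} (hv : enorm3 v = 1) : sq3 v = 1 :=
  Real.sqrt_eq_one.mp hv

lemma sq3_eq (v : Fin 3 → ℝ) : sq3 v = v 0 ^ 2 + v 1 ^ 2 + v 2 ^ 2 := Fin.sum_univ_three _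

lemma sq3_eq_dotProduct (v : Fin 3 → ℝ) : sq3 v = v ⬝ᵥ v := by
  simp only [sq3, dotProduct, sq]

lemma sq3_smul (c : ℝ) (v : Fin 3 → ℝ) : sq3 (c • v) = c ^ 2 * sq3 v := by
  simp only [sq3, Pi.smul_apply, smul_eq_mul, mul_pow, ← mul_sum]

lemma sq3_sum_le {ι : Type*} (s : Finset ι) (x : ι → Fin 3 → ℝ) :
    sq3 (∑ j ∈ s, x j) ≤ #s * ∑ j ∈ s, sq3 (x j) := by
  simp only [sq3, Finset.sum_apply]
  rw [sum_comm, mul_sum]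
  exact sum_le_sum fun k _ => sq_sum_le_card_mul_sum_sq

lemma sq3_add_le (x y : Fin 3 → ℝ) : sq3 (x + y) ≤ 2 * (sq3 x + sq3 y) := by
  simp only [sq3_eq, Pi.add_apply]
  nlinarith [sq_nonneg (x 0 - y 0), sq_nonneg (x 1 - y 1), sq_nonneg (x 2 - y 2)]

lemma sq3_sub_le (x y : Fin 3 → ℝ) : sq3 (x - y) ≤ 2 * (sq3 x + sq3 y) := by
  simpa [sub_eq_add_neg, sq3_eq] using sq3_add_le x (-y)

lemma sq3_cross_le (a b : Fin 3 → ℝ) : sq3 (a ⨯₃ b) ≤ sq3 a * sq3 b := by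
  simp only [sq3_eq_dotProduct, cross_dot_cross, dotProduct_comm b a]
  nlinarith [sq_nonneg (a ⬝ᵥ b)]

lemma sq3_sub_smul_cross_self (t : ℝ) (v w : Fin 3 → ℝ) :
    sq3 (v - t • v ⨯₃ w) = sq3 v + t ^ 2 * sq3 (v ⨯₃ w) := by
  simp only [sq3_eq_dotProduct, sub_dotProduct, dotProduct_sub, smul_dotProduct, dotProduct_smul,
    dotProduct_comm (v ⨯₃ w) v, dot_self_cross, smul_eq_mul]
  ring

lemma cross_apply_zero (a b : Fin 3 → ℝ) : (a ⨯₃ b) 0 = a 1 * b 2 - a 2 * b 1 := by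
  simp [cross_apply]

lemma cross_apply_one (a b : Fin 3 → ℝ) : (a ⨯₃ b) 1 = a 2 * b 0 - a 0 * b 2 := by
  simp [cross_apply]

lemma cross_apply_two (a b : Fin 3 → ℝ) : (a ⨯₃ b) 2 = a 0 * b 1 - a 1 * b 0 := by
  simp [cross_apply]

lemma Vmat_sub_smul_cross (τ : ℝ) (w d : Fin 3 → ℝ) :
    Vmat τ w d - (τ / 2) • Vmat τ w d ⨯₃ w = d + (τ / 2) • d ⨯₃ w := by
  have hpos : 0 < 1 + τ ^ 2 / 4 * (w 0 ^ 2 + w 1 ^ 2 + w 2 ^ 2) := by positivity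
  ext k
  fin_cases k <;>
  · simp only [Fin.zero_eta, Fin.mk_one, Fin.reduceFinMk, Vmat, Pi.add_apply, Pi.sub_apply,
      Pi.smul_apply, smul_eq_mul, cross_apply_zero, cross_apply_one, cross_apply_two, sq3_eq,
      Fin.sum_univ_three]
    field_simp
    ring

lemma sq3_Vmat (τ : ℝ) (w d : Fin 3 → ℝ) : sq3 (Vmat τ w d) = sq3 d := by
  have hpos : 0 < 1 + τ ^ 2 / 4 * (w 0 ^ 2 + w 1 ^ 2 + w 2 ^ 2) := by positivity
  simp only [Vmat, Pi.add_apply, Pi.smul_apply, smul_eq_mul, cross_apply_zero,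
      cross_apply_one, cross_apply_two, sq3_eq, Fin.sum_univ_three]
  field_simp
  ring

lemma sq3_Vmat_sub_le (τ : ℝ) (w w' d : Fin 3 → ℝ) :
    sq3 (Vmat τ w d - Vmat τ w' d) ≤ τ ^ 2 * sq3 d * sq3 (w - w') := by
  set a := Vmat τ w d
  set b := Vmat τ w' d
  have key : (a - b) - (τ / 2) • (a - b) ⨯₃ w = (τ / 2) • (b + d) ⨯₃ (w - w') := by
    have ha := Vmat_sub_smul_cross τ w d
    have hb := Vmat_sub_smul_cross τ w' d
    simp only [map_add, map_sub, LinearMap.add_apply, LinearMap.sub_apply] at *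
    linear_combination (norm := module) ha - hb
  have hbd : sq3 (b + d) ≤ 4 * sq3 d := by
    have := sq3_add_le b d
    rw [sq3_Vmat] at this
    linarith
  have hcross : sq3 ((b + d) ⨯₃ (w - w')) ≤ 4 * sq3 d * sq3 (w - w') :=
    (sq3_cross_le _ _).trans (mul_le_mul_of_nonneg_right hbd (sq3_nonneg _))
  have hsq := congrArg sq3 key
  rw [sq3_sub_smul_cross_self, sq3_smul] at hsq
  nlinarith [mul_le_mul_of_nonneg_left hcross (sq_nonneg (τ / 2)),
    mul_nonneg (sq_nonneg (τ / 2)) (sq3_nonneg ((a - b) ⨯₃ w))]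

section Grid

variable {M : ℕ} (h : ℝ)

lemma sq3_Dp_le (u : (Fin 3 → ZMod M) → Fin 3 → ℝ) (j : Fin 3) (i : Fin 3 → ZMod M) :
    sq3 (Dp h u j i) ≤ 2 * h⁻¹ ^ 2 * (sq3 (u (i + Pi.single j 1)) + sq3 (u i)) := by
  rw [Dp, sq3_smul, mul_assoc, mul_left_comm]
  exact mul_le_mul_of_nonneg_left (sq3_sub_le _ _) (sq_nonneg _)

lemma sq3_Dm_le (u : (Fin 3 → ZMod M) → Fin 3 → ℝ) (j : Fin 3) (i : Fin 3 → ZMod M) :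
    sq3 (Dm h u j i) ≤ 2 * h⁻¹ ^ 2 * (sq3 (u i) + sq3 (u (i - Pi.single j 1))) := by
  rw [Dm, sq3_smul, mul_assoc, mul_left_comm]
  exact mul_le_mul_of_nonneg_left (sq3_sub_le _ _) (sq_nonneg _)

lemma sq3_Dp_le_of_le {u : (Fin 3 → ZMod M) → Fin 3 → ℝ} {B : ℝ} (hu : ∀ i, sq3 (u i) ≤ B)
    (j : Fin 3) (i : Fin 3 → ZMod M) : sq3 (Dp h u j i) ≤ 4 * h⁻¹ ^ 2 * B := by
  calc sq3 (Dp h u j i) ≤ 2 * h⁻¹ ^ 2 * (B + B) :=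
        (sq3_Dp_le h u j i).trans (by gcongr <;> apply hu)
    _ = 4 * h⁻¹ ^ 2 * B := by ring

lemma sq3_Dm_le_of_le {u : (Fin 3 → ZMod M) → Fin 3 → ℝ} {B : ℝ} (hu : ∀ i, sq3 (u i) ≤ B)
    (j : Fin 3) (i : Fin 3 → ZMod M) : sq3 (Dm h u j i) ≤ 4 * h⁻¹ ^ 2 * B := by
  calc sq3 (Dm h u j i) ≤ 2 * h⁻¹ ^ 2 * (B + B) :=
        (sq3_Dm_le h u j i).trans (by gcongr <;> apply hu)
    _ = 4 * h⁻¹ ^ 2 * B := by ring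

lemma sq3_lapl_le (u : (Fin 3 → ZMod M) → Fin 3 → ℝ) (i : Fin 3 → ZMod M) :
    sq3 (lapl h u i) ≤ 3 * ∑ j, sq3 (Dp h (Dm h u j) j i) := by
  simpa [lapl] using sq3_sum_le univ fun j => Dp h (Dm h u j) j i

lemma sq3_lapl_le_of_le {u : (Fin 3 → ZMod M) → Fin 3 → ℝ} {B : ℝ} (hu : ∀ i, sq3 (u i) ≤ B)
    (i : Fin 3 → ZMod M) : sq3 (lapl h u i) ≤ 144 * h⁻¹ ^ 4 * B := by
  calc sq3 (lapl h u i) ≤ 3 * ∑ _j : Fin 3, 4 * h⁻¹ ^ 2 * (4 * h⁻¹ ^ 2 * B) :=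
        (sq3_lapl_le h u i).trans <| by
          gcongr with j
          exact sq3_Dp_le_of_le h (sq3_Dm_le_of_le h hu j) j i
    _ = 144 * h⁻¹ ^ 4 * B := by simp only [sum_const, card_univ, Fintype.card_fin]; ring

lemma lapl_sub (u v : (Fin 3 → ZMod M) → Fin 3 → ℝ) : lapl h (u - v) = lapl h u - lapl h v := by
  ext i k
  simp only [lapl, Dp, Dm, Pi.sub_apply, Finset.sum_apply, Pi.smul_apply, smul_eq_mul,
    ← sum_sub_distrib]
  exact sum_congr rfl fun _ _ => by ring

variable [NeZero M]

lemma sum_sq3_Dp_le (u : (Fin 3 → ZMod M) → Fin 3 → ℝ) (j : Fin 3) :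
    ∑ i, sq3 (Dp h u j i) ≤ 4 * h⁻¹ ^ 2 * ∑ i, sq3 (u i) := by
  have hshift : ∑ i, sq3 (u (i + Pi.single j 1)) = ∑ i, sq3 (u i) :=
    Equiv.sum_comp (Equiv.addRight (Pi.single j 1)) fun i => sq3 (u i)
  calc ∑ i, sq3 (Dp h u j i)
      ≤ ∑ i, 2 * h⁻¹ ^ 2 * (sq3 (u (i + Pi.single j 1)) + sq3 (u i)) :=
        sum_le_sum fun i _ => sq3_Dp_le h u j i
    _ = 4 * h⁻¹ ^ 2 * ∑ i, sq3 (u i) := by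
        rw [← mul_sum, sum_add_distrib, hshift]; ring

lemma sum_sq3_Dm_le (u : (Fin 3 → ZMod M) → Fin 3 → ℝ) (j : Fin 3) :
    ∑ i, sq3 (Dm h u j i) ≤ 4 * h⁻¹ ^ 2 * ∑ i, sq3 (u i) := by
  have hshift : ∑ i, sq3 (u (i - Pi.single j 1)) = ∑ i, sq3 (u i) :=
    Equiv.sum_comp (Equiv.subRight (Pi.single j 1)) fun i => sq3 (u i)
  calc ∑ i, sq3 (Dm h u j i)
      ≤ ∑ i, 2 * h⁻¹ ^ 2 * (sq3 (u i) + sq3 (u (i - Pi.single j 1))) :=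
        sum_le_sum fun i _ => sq3_Dm_le h u j i
    _ = 4 * h⁻¹ ^ 2 * ∑ i, sq3 (u i) := by
        rw [← mul_sum, sum_add_distrib, hshift]; ring

lemma sum_sq3_lapl_le (u : (Fin 3 → ZMod M) → Fin 3 → ℝ) :
    ∑ i, sq3 (lapl h u i) ≤ 144 * h⁻¹ ^ 4 * ∑ i, sq3 (u i) := by
  calc ∑ i, sq3 (lapl h u i) ≤ ∑ i, 3 * ∑ j, sq3 (Dp h (Dm h u j) j i) :=
        sum_le_sum fun i _ => sq3_lapl_le h u i
    _ = 3 * ∑ j, ∑ i, sq3 (Dp h (Dm h u j) j i) := by rw [← mul_sum, sum_comm]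
    _ ≤ 3 * ∑ _j : Fin 3, 4 * h⁻¹ ^ 2 * (4 * h⁻¹ ^ 2 * ∑ i, sq3 (u i)) := by
        gcongr with j
        exact (sum_sq3_Dp_le h _ j).trans (by gcongr; exact sum_sq3_Dm_le h u j)
    _ = 144 * h⁻¹ ^ 4 * ∑ i, sq3 (u i) := by
        simp only [sum_const, card_univ, Fintype.card_fin]; ring

end Grid

def VmatField {M : ℕ} (Δt : ℝ) (dm wm u : (Fin 3 → ZMod M) → Fin 3 → ℝ) :
    (Fin 3 → ZMod M) → Fin 3 → ℝ :=
  fun j => Vmat Δt ((2 : ℝ)⁻¹ • (wm j + u j)) (dm j)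

section FixedPointMap

variable {M : ℕ} {h Δt : ℝ} {dm wm : (Fin 3 → ZMod M) → Fin 3 → ℝ}

lemma Fm_apply (u : (Fin 3 → ZMod M) → Fin 3 → ℝ) (i : Fin 3 → ZMod M) :
    Fm h Δt dm wm u i = wm i + Δt • lapl h (VmatField Δt dm wm u) i ⨯₃ VmatField Δt dm wm u i :=
  rfl

lemma sq3_VmatField_sub_le (u₁ u₂ : (Fin 3 → ZMod M) → Fin 3 → ℝ) (i : Fin 3 → ZMod M) :
    sq3 ((VmatField Δt dm wm u₁ - VmatField Δt dm wm u₂) i)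
      ≤ Δt ^ 2 / 4 * sq3 (dm i) * sq3 ((u₁ - u₂) i) := by
  have hmid : (2 : ℝ)⁻¹ • (wm i + u₁ i) - (2 : ℝ)⁻¹ • (wm i + u₂ i) = (2 : ℝ)⁻¹ • (u₁ - u₂) i := by
    simp only [Pi.sub_apply]; module
  have := sq3_Vmat_sub_le Δt ((2 : ℝ)⁻¹ • (wm i + u₁ i)) ((2 : ℝ)⁻¹ • (wm i + u₂ i)) (dm i)
  rw [hmid, sq3_smul] at this
  exact this.trans_eq (by ring)

lemma Fm_sub_Fm_apply (u₁ u₂ : (Fin 3 → ZMod M) → Fin 3 → ℝ) (i : Fin 3 → ZMod M) :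
    (Fm h Δt dm wm u₁ - Fm h Δt dm wm u₂) i =
      Δt • (lapl h (VmatField Δt dm wm u₁ - VmatField Δt dm wm u₂) i ⨯₃ VmatField Δt dm wm u₁ i
        + lapl h (VmatField Δt dm wm u₂) i
          ⨯₃ (VmatField Δt dm wm u₁ - VmatField Δt dm wm u₂) i) := by
  simp only [Pi.sub_apply, Fm_apply, lapl_sub, map_sub, LinearMap.sub_apply]
  module

lemma sq3_Fm_sub_Fm_apply_le (hd : ∀ i, sq3 (dm i) = 1) (u₁ u₂ : (Fin 3 → ZMod M) → Fin 3 → ℝ)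
    (i : Fin 3 → ZMod M) :
    sq3 ((Fm h Δt dm wm u₁ - Fm h Δt dm wm u₂) i)
      ≤ 2 * Δt ^ 2 * (sq3 (lapl h (VmatField Δt dm wm u₁ - VmatField Δt dm wm u₂) i)
        + 144 * h⁻¹ ^ 4 * sq3 ((VmatField Δt dm wm u₁ - VmatField Δt dm wm u₂) i)) := by
  set V₁ := VmatField Δt dm wm u₁
  set V₂ := VmatField Δt dm wm u₂
  have hV₁ : sq3 (V₁ i) = 1 := (sq3_Vmat _ _ _).trans (hd i)
  have hlapV₂ : sq3 (lapl h V₂ i) ≤ 144 * h⁻¹ ^ 4 :=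
    (sq3_lapl_le_of_le h (fun j => ((sq3_Vmat _ _ _).trans (hd j)).le) i).trans_eq (mul_one _)
  rw [Fm_sub_Fm_apply, sq3_smul, mul_comm 2, mul_assoc]
  gcongr
  refine (sq3_add_le _ _).trans ?_
  gcongr
  · simpa [hV₁] using sq3_cross_le (lapl h (V₁ - V₂) i) (V₁ i)
  · exact (sq3_cross_le _ _).trans (mul_le_mul_of_nonneg_right hlapV₂ (sq3_nonneg _))

lemma sum_sq3_Fm_sub_Fm_le [NeZero M] (hd : ∀ i, sq3 (dm i) = 1)
    (u₁ u₂ : (Fin 3 → ZMod M) → Fin 3 → ℝ) :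
    ∑ i, sq3 ((Fm h Δt dm wm u₁ - Fm h Δt dm wm u₂) i)
      ≤ 144 * Δt ^ 4 * h⁻¹ ^ 4 * ∑ i, sq3 ((u₁ - u₂) i) := by
  set g := VmatField Δt dm wm u₁ - VmatField Δt dm wm u₂
  have hg : ∑ i, sq3 (g i) ≤ Δt ^ 2 / 4 * ∑ i, sq3 ((u₁ - u₂) i) := by
    rw [mul_sum]
    exact sum_le_sum fun i _ => (sq3_VmatField_sub_le u₁ u₂ i).trans_eq (by rw [hd i, mul_one])
  calc ∑ i, sq3 ((Fm h Δt dm wm u₁ - Fm h Δt dm wm u₂) i)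
      ≤ ∑ i, 2 * Δt ^ 2 * (sq3 (lapl h g i) + 144 * h⁻¹ ^ 4 * sq3 (g i)) :=
        sum_le_sum fun i _ => sq3_Fm_sub_Fm_apply_le hd u₁ u₂ i
    _ = 2 * Δt ^ 2 * (∑ i, sq3 (lapl h g i) + 144 * h⁻¹ ^ 4 * ∑ i, sq3 (g i)) := by
        rw [← mul_sum, sum_add_distrib, ← mul_sum]
    _ ≤ 2 * Δt ^ 2 * (144 * h⁻¹ ^ 4 * ∑ i, sq3 (g i) + 144 * h⁻¹ ^ 4 * ∑ i, sq3 (g i)) := by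
        gcongr
        exact sum_sq3_lapl_le h g
    _ ≤ 2 * Δt ^ 2 * (2 * (144 * h⁻¹ ^ 4 * (Δt ^ 2 / 4 * ∑ i, sq3 ((u₁ - u₂) i)))) := by
        rw [← two_mul]
        gcongr
    _ = 144 * Δt ^ 4 * h⁻¹ ^ 4 * ∑ i, sq3 ((u₁ - u₂) i) := by ring

end FixedPointMap

section L2

variable {M : ℕ} [NeZero M] {h : ℝ}

lemma l2norm_le_mul_of_sum_sq3_le (hh : 0 ≤ h) {K : ℝ} (hK : 0 ≤ K)
    {u v : (Fin 3 → ZMod M) → Fin 3 → ℝ} (huv : ∑ i, sq3 (u i) ≤ K ^ 2 * ∑ i, sq3 (v i)) :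
    l2norm h u ≤ K * l2norm h v := by
  rw [l2norm, l2norm, ← Real.sqrt_sq hK, ← Real.sqrt_mul (sq_nonneg K)]
  apply Real.sqrt_le_sqrt
  have := mul_le_mul_of_nonneg_left huv (pow_nonneg hh 3)
  simp only [sq3] at this
  linarith

lemma l2norm_Fm_sub_Fm_le (hh : 0 ≤ h) (Δt : ℝ) {dm : (Fin 3 → ZMod M) → Fin 3 → ℝ}
    (hd : ∀ i, sq3 (dm i) = 1) (wm u₁ u₂ : (Fin 3 → ZMod M) → Fin 3 → ℝ) :
    l2norm h (Fm h Δt dm wm u₁ - Fm h Δt dm wm u₂)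
      ≤ 12 * (Δt ^ 2 / h ^ 2) * l2norm h (u₁ - u₂) :=
  l2norm_le_mul_of_sum_sq3_le hh (by positivity)
    ((sum_sq3_Fm_sub_Fm_le hd u₁ u₂).trans_eq (by ring))

lemma l2norm_sub_eq_dist (u v : (Fin 3 → ZMod M) → Fin 3 → ℝ) :
    l2norm h (u - v) = √(h ^ 3) * dist (WithLp.toLp 2 (Function.uncurry u) : EuclideanSpace ℝ _)
      (WithLp.toLp 2 (Function.uncurry v)) := by
  rw [EuclideanSpace.dist_eq, ← Real.sqrt_mul' _ (by positivity), l2norm, Fintype.sum_prod_type]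
  simp [Real.dist_eq, sq_abs]

lemma existsUnique_fixedPoint_of_l2norm_le (hh : 0 < h) {K : ℝ} (hK0 : 0 ≤ K) (hK : K < 1)
    (F : ((Fin 3 → ZMod M) → Fin 3 → ℝ) → (Fin 3 → ZMod M) → Fin 3 → ℝ)
    (hF : ∀ u v, l2norm h (F u - F v) ≤ K * l2norm h (u - v)) :
    ∃! u, F u = u := by
  let e : ((Fin 3 → ZMod M) → Fin 3 → ℝ) ≃ EuclideanSpace ℝ ((Fin 3 → ZMod M) × Fin 3) :=
    (Equiv.curry _ _ _).symm.trans (WithLp.equiv 2 _).symm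
  have hdist (u v) : l2norm h (u - v) = √(h ^ 3) * dist (e u) (e v) := l2norm_sub_eq_dist u v
  have hf : ContractingWith ⟨K, hK0⟩ (e ∘ F ∘ e.symm) := by
    refine ⟨hK, LipschitzWith.of_dist_le_mul fun x y => ?_⟩
    have := hF (e.symm x) (e.symm y)
    rw [hdist, hdist, e.apply_symm_apply, e.apply_symm_apply, mul_left_comm] at this
    exact le_of_mul_le_mul_left this (by positivity)
  refine (e.existsUnique_congr fun u => ?_).mpr
    ⟨_, hf.fixedPoint_isFixedPt, fun x hx => hf.fixedPoint_unique hx⟩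
  simp only [Function.IsFixedPt, Function.comp_apply, Equiv.symm_apply_apply, Equiv.apply_eq_iff_eq]

end L2

/-- There is a constant `C > 0` such that for every grid,
every `Δt > 0`, every unit-length `dᵐ` and every `wᵐ`, the map `F_m` is
Lipschitz with constant `C Δt²/h²` in the discrete L² norm; in particular
there is `κ > 0` such that if `Δt ≤ κ h` then `F_m` is a contraction and has a
unique fixed point. -/
theorem Fm_lipschitz_and_contraction :
    ∃ C > (0 : ℝ),
      (∀ (M : ℕ) [NeZero M], ∀ h Δt : ℝ, h = 1 / M → 0 < Δt →
        ∀ dm wm : (Fin 3 → ZMod M) → Fin 3 → ℝ, (∀ i, enorm3 (dm i) = 1) →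
        ∀ u₁ u₂ : (Fin 3 → ZMod M) → Fin 3 → ℝ,
          l2norm h (Fm h Δt dm wm u₁ - Fm h Δt dm wm u₂)
            ≤ C * (Δt ^ 2 / h ^ 2) * l2norm h (u₁ - u₂)) ∧
      ∃ κ > (0 : ℝ), ∀ (M : ℕ) [NeZero M], ∀ h Δt : ℝ, h = 1 / M → 0 < Δt →
        Δt ≤ κ * h →
        ∀ dm wm : (Fin 3 → ZMod M) → Fin 3 → ℝ, (∀ i, enorm3 (dm i) = 1) →
          C * (Δt ^ 2 / h ^ 2) < 1 ∧ ∃! u, Fm h Δt dm wm u = u := by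
  have hpos (M : ℕ) [NeZero M] : (0 : ℝ) < 1 / M := by
    have := NeZero.pos M
    positivity
  refine ⟨12, by norm_num, fun M _ h Δt hh _ dm wm hd u₁ u₂ => ?_, 1 / 4, by norm_num,
    fun M _ h Δt hh hΔt hκ dm wm hd => ?_⟩
  · exact l2norm_Fm_sub_Fm_le (hh ▸ hpos M).le Δt
      (fun i => sq3_eq_one_of_enorm3_eq_one (hd i)) wm u₁ u₂
  · have hh0 : 0 < h := hh ▸ hpos M
    have hratio : Δt ^ 2 / h ^ 2 ≤ 1 / 16 := by
      rw [div_le_iff₀ (by positivity)]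
      nlinarith
    have hlip := l2norm_Fm_sub_Fm_le hh0.le Δt (fun i => sq3_eq_one_of_enorm3_eq_one (hd i)) wm
    exact ⟨by linarith,
      existsUnique_fixedPoint_of_l2norm_le hh0 (by positivity) (by linarith) _ hlip⟩
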